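/- arXiv:2210.15341 — 4 statements merged into one kernel-verified Lean document; each statement's English description precedes it below -/
import Mathlib

section
/- Let X be a compact topological space and let G be a subgroup and sublattice of the lattice-ordered group C(X,ℝ) of continuous real-valued functions on X, containing the constant function 1. Suppose that for all distinct x, y ∈ X there is f ∈ G with f(x) ≠ f(y). Let φ : G → ℝ be a group homomorphism preserving binary suprema and infima with φ(1) = 1. Then there exists a unique x ∈ X such that φ(f) = f(x) for all f ∈ G. -/
/-- Let `X` be a compact topological space and `G` a subgroup and sublattice of
`C(X, ℝ)` containing the constant function `1`, separating the points of `X`. Any map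
`φ : G → ℝ` which is additive, preserves binary suprema and infima, and sends `1` to `1`
is the evaluation at a unique point of `X`. -/
theorem evaluation_of_unital_lattice_hom
    {X : Type*} [TopologicalSpace X] [CompactSpace X]
    (G : AddSubgroup C(X, ℝ))
    (h1 : (1 : C(X, ℝ)) ∈ G)
    (hsup : ∀ f ∈ G, ∀ g ∈ G, f ⊔ g ∈ G)
    (hinf : ∀ f ∈ G, ∀ g ∈ G, f ⊓ g ∈ G)
    (hsep : ∀ x y : X, x ≠ y → ∃ f ∈ G, f x ≠ f y)
    (φ : C(X, ℝ) → ℝ)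
    (hadd : ∀ f ∈ G, ∀ g ∈ G, φ (f + g) = φ f + φ g)
    (hφsup : ∀ f ∈ G, ∀ g ∈ G, φ (f ⊔ g) = max (φ f) (φ g))
    (hφinf : ∀ f ∈ G, ∀ g ∈ G, φ (f ⊓ g) = min (φ f) (φ g))
    (hφ1 : φ 1 = 1) :
    ∃! x : X, ∀ f ∈ G, φ f = f x := by
  have h0 : (0 : C(X, ℝ)) ∈ G := G.zero_mem
  have hφ0 : φ 0 = 0 := by
    have := hadd 0 h0 0 h0
    simp at this
    linarith
  -- X is nonempty
  have hne : Nonempty X := by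
    by_contra h
    rw [not_nonempty_iff] at h
    have : (1 : C(X, ℝ)) = 0 := by ext x; exact h.elim x
    rw [this, hφ0] at hφ1
    exact one_ne_zero hφ1.symm
  have hneg : ∀ f ∈ G, φ (-f) = -φ f := by
    intro f hf
    have := hadd f hf (-f) (G.neg_mem hf)
    simp [hφ0] at this
    linarith
  have hsub : ∀ f ∈ G, ∀ g ∈ G, φ (f - g) = φ f - φ g := by
    intro f hf g hg
    have := hadd f hf (-g) (G.neg_mem hg)
    rw [hneg g hg] at this
    simpa [sub_eq_add_neg] using this
  have hnsmul : ∀ (n : ℕ), ∀ f ∈ G, φ (n • f) = n * φ f := by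
    intro n
    induction n with
    | zero => intro f hf; simp [hφ0]
    | succ k ih =>
      intro f hf
      have : (k + 1) • f = k • f + f := by rw [add_nsmul, one_nsmul]
      rw [this, hadd _ (G.nsmul_mem hf k) f hf, ih f hf]
      push_cast
      ring
  have hzsmul : ∀ (m : ℤ), ∀ f ∈ G, φ (m • f) = m * φ f := by
    intro m f hf
    rcases m with n | n
    · simpa using hnsmul n f hf
    · have : (Int.negSucc n) • f = -((n + 1 : ℕ) • f) := negSucc_zsmul f n
      rw [this, hneg _ (G.nsmul_mem hf (n + 1)), hnsmul (n + 1) f hf, Int.cast_negSucc]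
      push_cast
      ring
  have hint : ∀ m : ℤ, φ (m • (1 : C(X, ℝ))) = m := by
    intro m
    rw [hzsmul m 1 h1, hφ1, mul_one]
  -- Lemma A: rational lower bounds pass to φ
  have lemA : ∀ f ∈ G, ∀ q : ℚ, (∀ x, (q : ℝ) ≤ f x) → (q : ℝ) ≤ φ f := by
    intro f hf q hq
    have hden : (0 : ℝ) < (q.den : ℝ) := by positivity
    have hq' : (q.num : ℝ) = q.den * (q : ℝ) := by
      rw [Rat.cast_def]; field_simp
    have hle : (q.num • (1 : C(X, ℝ))) ≤ (q.den : ℤ) • f := by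
      rw [ContinuousMap.le_def]
      intro x
      have := hq x
      have e1 : (q.num • (1 : C(X, ℝ))) x = (q.num : ℝ) := by simp
      have e2 : (((q.den : ℤ)) • f) x = ((q.den : ℤ) : ℝ) * f x := by simp
      rw [e1, e2, hq']
      push_cast
      nlinarith
    have hinf_eq : ((q.den : ℤ) • f) ⊓ (q.num • (1 : C(X, ℝ))) = q.num • (1 : C(X, ℝ)) :=
      inf_eq_right.2 hle
    have hmem1 : (q.den : ℤ) • f ∈ G := G.zsmul_mem hf _
    have hmem2 : q.num • (1 : C(X, ℝ)) ∈ G := G.zsmul_mem h1 _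
    have := hφinf _ hmem1 _ hmem2
    rw [hinf_eq, hzsmul _ f hf, hint] at this
    have hle' : (q.num : ℝ) ≤ (q.den : ℤ) * φ f := min_eq_right_iff.mp this.symm
    rw [hq'] at hle'
    push_cast at hle'
    nlinarith
  -- Lemma B: φ almost dominated by values
  have lemB : ∀ g ∈ G, ∀ δ : ℝ, 0 < δ → ∃ x : X, g x < φ g + δ := by
    intro g hg δ hδ
    by_contra h
    push_neg at h
    obtain ⟨q, hq1, hq2⟩ := exists_rat_btwn (show φ g < φ g + δ by linarith)
    have : (q : ℝ) ≤ φ g := lemA g hg q (fun x => le_trans (le_of_lt hq2) (h x))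
    linarith
  -- Key: existence of a point where all f ∈ G are almost dominated by φ f
  have key : ∃ x : X, ∀ f ∈ G, ∀ ε : ℝ, 0 < ε → f x ≤ φ f + ε := by
    by_contra hcon
    push_neg at hcon
    set ι := {p : C(X, ℝ) × ℝ // p.1 ∈ G ∧ 0 < p.2} with hι
    set t : ι → Set X := fun i => {x : X | i.1.1 x ≤ φ i.1.1 + i.1.2} with ht
    have htc : ∀ i : ι, IsClosed (t i) :=
      fun i => isClosed_le i.1.1.continuous continuous_const
    have hempty : (Set.univ : Set X) ∩ ⋂ i, t i = ∅ := by
      ext x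
      simp only [Set.mem_inter_iff, Set.mem_univ, true_and, Set.mem_iInter,
        Set.mem_empty_iff_false, iff_false]
      intro hx
      obtain ⟨f, hf, ε, hε, hlt⟩ := hcon x
      exact absurd (hx ⟨(f, ε), hf, hε⟩) (by simpa [ht] using hlt)
    obtain ⟨u, hu⟩ := IsCompact.elim_finite_subfamily_closed isCompact_univ t htc hempty
    have hune : u.Nonempty := by
      rcases Finset.eq_empty_or_nonempty u with rfl | h
      · simp at hu
      · exact h
    set ε := u.inf' hune (fun i => i.1.2) with hε
    have hεpos : 0 < ε := by
      rw [hε, Finset.lt_inf'_iff]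
      exact fun i _ => i.2.2
    have hεle : ∀ i ∈ u, ε ≤ i.1.2 := fun i hi => Finset.inf'_le _ hi
    -- choose rationals
    have hq : ∀ i : ι, ∃ q : ℚ, φ i.1.1 < (q : ℝ) ∧ (q : ℝ) < φ i.1.1 + ε :=
      fun i => exists_rat_btwn (by linarith)
    choose q hq1 hq2 using hq
    set g : ι → C(X, ℝ) := fun i => ((q i).den : ℤ) • i.1.1 - (q i).num • (1 : C(X, ℝ))
      with hgdef
    have hgmem : ∀ i : ι, g i ∈ G :=
      fun i => G.sub_mem (G.zsmul_mem i.2.1 _) (G.zsmul_mem h1 _)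
    have hgneg : ∀ i : ι, φ (g i) < 0 := by
      intro i
      rw [hgdef]
      simp only
      rw [hsub _ (G.zsmul_mem i.2.1 _) _ (G.zsmul_mem h1 _), hzsmul _ _ i.2.1, hint]
      have hden : (0 : ℝ) < ((q i).den : ℝ) := by positivity
      have hq' : ((q i).num : ℝ) = (q i).den * ((q i) : ℝ) := by
        rw [Rat.cast_def]; field_simp
      rw [hq']
      push_cast
      nlinarith [hq1 i]
    -- take the sup over u
    set s := u.sup' hune g with hs
    have hsprop : s ∈ G ∧ φ s < 0 := by
      rw [hs]
      refine Finset.sup'_induction (p := fun c => c ∈ G ∧ φ c < 0) hune g ?_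
        (fun i _ => ⟨hgmem i, hgneg i⟩)
      rintro a ⟨ha1, ha2⟩ b ⟨hb1, hb2⟩
      refine ⟨hsup a ha1 b hb1, ?_⟩
      rw [hφsup a ha1 b hb1]
      exact max_lt ha2 hb2
    obtain ⟨x, hx⟩ := lemB s hsprop.1 (-φ s) (by linarith [hsprop.2])
    have hxneg : s x < 0 := by linarith
    have hxall : ∀ i ∈ u, x ∈ t i := by
      intro i hi
      have hle : g i ≤ s := Finset.le_sup' g hi
      have : (g i) x < 0 := lt_of_le_of_lt (hle x) hxneg
      rw [hgdef] at this
      simp only [ContinuousMap.sub_apply] at this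
      have hval : (((q i).den : ℤ) • i.1.1) x - ((q i).num • (1 : C(X, ℝ))) x
          = ((q i).den : ℝ) * i.1.1 x - ((q i).num : ℝ) := by
        simp
      rw [hval] at this
      have hden : (0 : ℝ) < ((q i).den : ℝ) := by positivity
      have hq' : ((q i).num : ℝ) = (q i).den * ((q i) : ℝ) := by
        rw [Rat.cast_def]; field_simp
      rw [hq'] at this
      have hflt : i.1.1 x < ((q i) : ℝ) := by nlinarith
      have : i.1.1 x < φ i.1.1 + ε := lt_trans hflt (hq2 i)
      simp only [ht, Set.mem_setOf_eq]
      linarith [hεle i hi]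
    have : x ∈ (Set.univ : Set X) ∩ ⋂ i ∈ u, t i := by
      refine ⟨trivial, ?_⟩
      simp only [Set.mem_iInter]
      exact hxall
    rw [hu] at this
    exact this
  obtain ⟨x, hx⟩ := key
  have heval : ∀ f ∈ G, φ f = f x := by
    intro f hf
    have h1' : f x ≤ φ f := by
      apply le_of_forall_pos_le_add
      intro ε hε
      exact hx f hf ε hε
    have h2' : -f x ≤ -φ f := by
      have : (-f) x ≤ φ (-f) := by
        apply le_of_forall_pos_le_add
        intro ε hε
        exact hx (-f) (G.neg_mem hf) ε hε
      rwa [hneg f hf] at this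
    have : φ f ≤ f x := by simpa using h2'
    linarith
  refine ⟨x, heval, ?_⟩
  intro y hy
  by_contra hxy
  obtain ⟨f, hf, hfne⟩ := hsep y x hxy
  exact hfne ((hy f hf).symm.trans (heval f hf))
end

section
/- Let I be a set and let K be a compact subset of ℝ^I with the product topology, regarded as an a-space with denominator function den. Then the evaluation map η : K → Max(C(K)) sending x to the homomorphism f ↦ f(x) is a bijection, it is a homeomorphism onto Max(C(K)) with its topology induced from the product topology of ℝ^{C(K)}, and for every x ∈ K one has lcm{den(f(x)) : f ∈ C(K)} = den(x). -/
/-!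
Projections `x ↦ xᵢ` are a-maps, since `den xᵢ ∣ den x`; they separate points and give the
lcm identity. If a unital ℓ-homomorphism `φ` differed from every evaluation, then for each `y`
an integer cut `b` with `n φ(f) < b < n f(y) - 1` turns a witness `f` into
`g_y = max (n f - b) 0`, which is nonnegative with `g_y(y) > 1` and `φ(g_y) = 0`. Finitely
many sets `{g_y > 1}` cover `K`, so `G = ∑ g_y ≥ 1` while `φ(G) = 0 < 1 = φ(1)`, contradicting
monotonicity. A continuous bijection from the compact `K` onto the Hausdorff space `Max C(K)`
is a homeomorphism.
-/

open Classical in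
/-- The denominator of a real number: the reduced denominator if rational, `0` if irrational. -/
noncomputable def den (r : ℝ) : ℕ :=
  if h : ∃ q : ℚ, (q : ℝ) = r then h.choose.den else 0

/-- The least common multiple of a set of naturals, computed in `ℕ` ordered by
divisibility with `0` as top element. -/
noncomputable def setLcm (S : Set ℕ) : ℕ :=
  sInf {n | (∀ s ∈ S, s ∣ n) ∧ ∀ m : ℕ, (∀ s ∈ S, s ∣ m) → n ∣ m}

/-- The denominator of a point of `ℝ^I`. -/
noncomputable def denV {I : Type*} (x : I → ℝ) : ℕ :=
  setLcm (Set.range fun i => den (x i))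

/-- `C(K)`: the set of a-maps from `(K, den)` to `(ℝ, den)`, i.e. continuous
denominator-decreasing functions. -/
def CA {I : Type*} (K : Set (I → ℝ)) : Set (K → ℝ) :=
  {f | Continuous f ∧ ∀ x : K, den (f x) ∣ denV (x : I → ℝ)}

/-- `Max(C(K))`: the set of unit-preserving ℓ-group homomorphisms `C(K) → ℝ`, viewed
inside the product `ℝ^{C(K)}`. -/
def MaxSet {I : Type*} (K : Set (I → ℝ)) : Set ((CA K) → ℝ) :=
  {Φ | (∀ f g h : CA K, (∀ x : K, (h : K → ℝ) x = (f : K → ℝ) x + (g : K → ℝ) x) →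
          Φ h = Φ f + Φ g) ∧
       (∀ f g h : CA K, (∀ x : K, (h : K → ℝ) x = max ((f : K → ℝ) x) ((g : K → ℝ) x)) →
          Φ h = max (Φ f) (Φ g)) ∧
       (∀ f g h : CA K, (∀ x : K, (h : K → ℝ) x = min ((f : K → ℝ) x) ((g : K → ℝ) x)) →
          Φ h = min (Φ f) (Φ g)) ∧
       (∀ u : CA K, (∀ x : K, (u : K → ℝ) x = 1) → Φ u = 1)}

lemma den_ratCast (q : ℚ) : den q = q.den := by
  have h : ∃ q' : ℚ, (q' : ℝ) = q := ⟨q, rfl⟩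
  rw [den, dif_pos h, Rat.cast_injective h.choose_spec]

lemma den_of_irrational {r : ℝ} (h : Irrational r) : den r = 0 :=
  dif_neg h

lemma Rat.den_dvd_iff_exists_int (q : ℚ) (n : ℕ) : q.den ∣ n ↔ ∃ z : ℤ, n * q = z := by
  constructor
  · rintro ⟨k, rfl⟩
    exact ⟨k * q.num, by push_cast; rw [mul_comm (q.den : ℚ), mul_assoc, Rat.den_mul_eq_num]⟩
  · rintro ⟨z, hz⟩
    have hdvd : (q.den : ℤ) ∣ q.num * n := by
      refine ⟨z, ?_⟩
      have : (q.num : ℚ) * n = q.den * z := by rw [← hz, ← Rat.den_mul_eq_num]; ring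
      exact_mod_cast this
    have hcop : IsCoprime (q.den : ℤ) q.num := by
      rw [Int.isCoprime_iff_gcd_eq_one, Int.gcd_comm]
      exact q.reduced
    exact Int.natCast_dvd_natCast.mp (hcop.dvd_of_dvd_mul_left hdvd)

lemma den_dvd_iff (r : ℝ) (n : ℕ) : den r ∣ n ↔ ∃ z : ℤ, n * r = z := by
  by_cases hr : Irrational r
  · rw [den_of_irrational hr, zero_dvd_iff]
    constructor
    · rintro rfl
      exact ⟨0, by simp⟩
    · rintro ⟨z, hz⟩
      by_contra hn
      exact (hr.natCast_mul hn).ne_int z hz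
  · obtain ⟨q, rfl⟩ := not_not.mp hr
    rw [den_ratCast, Rat.den_dvd_iff_exists_int]
    exact exists_congr fun z => by norm_cast

lemma den_intCast_dvd (z : ℤ) (n : ℕ) : den z ∣ n :=
  (den_dvd_iff _ n).2 ⟨n * z, by push_cast; rfl⟩

lemma den_add_dvd {a b : ℝ} {n : ℕ} (ha : den a ∣ n) (hb : den b ∣ n) : den (a + b) ∣ n := by
  obtain ⟨z, hz⟩ := (den_dvd_iff a n).1 ha
  obtain ⟨w, hw⟩ := (den_dvd_iff b n).1 hb
  exact (den_dvd_iff _ n).2 ⟨z + w, by push_cast; rw [mul_add, hz, hw]⟩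

lemma den_neg_dvd {a : ℝ} {n : ℕ} (ha : den a ∣ n) : den (-a) ∣ n := by
  obtain ⟨z, hz⟩ := (den_dvd_iff a n).1 ha
  exact (den_dvd_iff _ n).2 ⟨-z, by push_cast; rw [mul_neg, hz]⟩

/-- The common multiples of `S` form an ideal of `ℤ`; its nonnegative generator is the lcm. -/
lemma setLcm_dvd_iff {S : Set ℕ} {m : ℕ} : setLcm S ∣ m ↔ ∀ s ∈ S, s ∣ m := by
  let J : Ideal ℤ := ⨅ s ∈ S, Ideal.span {(s : ℤ)}
  let d := (Submodule.IsPrincipal.generator J).natAbs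
  have hd : ∀ m : ℕ, d ∣ m ↔ ∀ s ∈ S, s ∣ m := fun m => by
    simp only [d, J, ← Int.natCast_dvd_natCast, Int.natAbs_dvd,
      ← Submodule.IsPrincipal.mem_iff_generator_dvd, Submodule.mem_iInf, Ideal.mem_span_singleton]
  have hmem : setLcm S ∈ {n | (∀ s ∈ S, s ∣ n) ∧ ∀ m : ℕ, (∀ s ∈ S, s ∣ m) → n ∣ m} :=
    Nat.sInf_mem ⟨d, (hd d).1 dvd_rfl, fun m => (hd m).2⟩
  exact ⟨fun h s hs => (hmem.1 s hs).trans h, hmem.2 m⟩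

lemma dvd_setLcm {S : Set ℕ} {s : ℕ} (hs : s ∈ S) : s ∣ setLcm S :=
  setLcm_dvd_iff.1 dvd_rfl s hs

section Evaluation

variable {X : Type*} {A : AddSubgroup (X → ℝ)}

lemma exists_map_neg_of_map_lt (one_mem : (1 : X → ℝ) ∈ A) {φ : A →+ ℝ}
    (map_one : φ ⟨1, one_mem⟩ = 1) {f : A} {y : X} (h : φ f < (f : X → ℝ) y) :
    ∃ g : A, φ g < 0 ∧ 1 < (g : X → ℝ) y := by
  obtain ⟨n, hn⟩ := exists_nat_gt (2 / ((f : X → ℝ) y - φ f))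
  have hn' : 2 < n * ((f : X → ℝ) y - φ f) := by rwa [div_lt_iff₀ (sub_pos.2 h)] at hn
  -- `b` is the least integer above `n * φ f`, and `n * f y - 1` still lies above `b`
  set b := ⌊n * φ f⌋ + 1
  have hb₁ : n * φ f < b := by push_cast [b]; exact Int.lt_floor_add_one _
  have hb₂ : (b : ℝ) ≤ n * φ f + 1 := by push_cast [b]; linarith [Int.floor_le (n * φ f)]
  refine ⟨n • f - b • ⟨1, one_mem⟩, ?_, ?_⟩
  · rw [map_sub, map_nsmul, map_zsmul, map_one, nsmul_eq_mul, zsmul_eq_mul, mul_one]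
    linarith
  · simp only [AddSubgroup.coe_sub, AddSubgroup.coe_nsmul, AddSubgroup.coe_zsmul, nsmul_eq_mul,
      zsmul_eq_mul, mul_one, Pi.sub_apply, Pi.mul_apply, Pi.natCast_apply, Pi.intCast_apply]
    linarith

lemma exists_nonneg_map_eq_zero_of_map_ne (one_mem : (1 : X → ℝ) ∈ A)
    (sup_mem : ∀ {f g}, f ∈ A → g ∈ A → f ⊔ g ∈ A) {φ : A →+ ℝ}
    (map_one : φ ⟨1, one_mem⟩ = 1)
    (map_sup : ∀ f g : A, φ ⟨f ⊔ g, sup_mem f.2 g.2⟩ = max (φ f) (φ g))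
    {f : A} {y : X} (h : φ f ≠ (f : X → ℝ) y) :
    ∃ g : A, 0 ≤ (g : X → ℝ) ∧ 1 < (g : X → ℝ) y ∧ φ g = 0 := by
  obtain ⟨g, hφg, hgy⟩ : ∃ g : A, φ g < 0 ∧ 1 < (g : X → ℝ) y := by
    rcases h.lt_or_gt with h | h
    · exact exists_map_neg_of_map_lt one_mem map_one h
    · exact exists_map_neg_of_map_lt one_mem map_one (f := -f) (by simpa using h)
  refine ⟨⟨g ⊔ 0, sup_mem g.2 A.zero_mem⟩, le_sup_right, lt_sup_of_lt_left hgy, ?_⟩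
  calc φ _ = max (φ g) (φ 0) := map_sup g 0
    _ = 0 := by rw [map_zero, max_eq_right hφg.le]

theorem exists_map_eq_eval [TopologicalSpace X] [CompactSpace X]
    (continuous_mem : ∀ f ∈ A, Continuous f) (one_mem : (1 : X → ℝ) ∈ A)
    (sup_mem : ∀ {f g}, f ∈ A → g ∈ A → f ⊔ g ∈ A) {φ : A →+ ℝ}
    (map_one : φ ⟨1, one_mem⟩ = 1)
    (map_sup : ∀ f g : A, φ ⟨f ⊔ g, sup_mem f.2 g.2⟩ = max (φ f) (φ g)) :
    ∃ y : X, ∀ f : A, φ f = (f : X → ℝ) y := by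
  by_contra! hne
  choose f hf using hne
  choose g hg_nonneg hg_gt hφg using fun y =>
    exists_nonneg_map_eq_zero_of_map_ne one_mem sup_mem map_one map_sup (hf y)
  obtain ⟨t, ht⟩ := CompactSpace.elim_nhds_subcover (fun y => {x | 1 < (g y : X → ℝ) x})
    fun y => (isOpen_lt continuous_const (continuous_mem _ (g y).2)).mem_nhds (hg_gt y)
  set G : A := ∑ y ∈ t, g y
  have hG : 1 ≤ (G : X → ℝ) := fun x => by
    obtain ⟨y, hy, hxy⟩ : ∃ y ∈ t, 1 < (g y : X → ℝ) x := by
      simpa using ht.ge (Set.mem_univ x)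
    rw [show (G : X → ℝ) x = ∑ y ∈ t, (g y : X → ℝ) x by simp [G]]
    exact hxy.le.trans (Finset.single_le_sum (fun y _ => hg_nonneg y x) hy)
  have h1G : (1 : ℝ) ≤ φ G := by
    have := map_sup ⟨1, one_mem⟩ G
    simp only [sup_of_le_right hG, map_one] at this
    rw [this]
    exact le_max_left _ _
  have hφG : φ G = 0 := by simp [G, hφg]
  linarith

end Evaluation

section AMaps

variable {I : Type*} {K : Set (I → ℝ)}

def caAddSubgroup (K : Set (I → ℝ)) : AddSubgroup (K → ℝ) where
  carrier := CA K
  add_mem' hf hg := ⟨hf.1.add hg.1, fun x => den_add_dvd (hf.2 x) (hg.2 x)⟩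
  zero_mem' := ⟨continuous_const, fun _ => by simpa using den_intCast_dvd 0 _⟩
  neg_mem' hf := ⟨hf.1.neg, fun x => den_neg_dvd (hf.2 x)⟩

lemma one_mem_CA : (1 : K → ℝ) ∈ CA K :=
  ⟨continuous_const, fun _ => by simpa using den_intCast_dvd 1 _⟩

lemma sup_mem_CA {f g : K → ℝ} (hf : f ∈ CA K) (hg : g ∈ CA K) : f ⊔ g ∈ CA K :=
  ⟨hf.1.sup hg.1, fun x => by rcases max_choice (f x) (g x) with h | h <;> simp [h, hf.2, hg.2]⟩

lemma proj_mem_CA (i : I) : (fun x : K => (x : I → ℝ) i) ∈ CA K :=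
  ⟨(continuous_apply i).comp continuous_subtype_val, fun _ => dvd_setLcm ⟨i, rfl⟩⟩

lemma setLcm_den_apply_eq_denV (x : K) :
    setLcm (Set.range fun f : CA K => den ((f : K → ℝ) x)) = denV (x : I → ℝ) :=
  Nat.dvd_antisymm (setLcm_dvd_iff.2 <| by rintro _ ⟨f, rfl⟩; exact f.2.2 x)
    (setLcm_dvd_iff.2 <| by rintro _ ⟨i, rfl⟩; exact dvd_setLcm ⟨⟨_, proj_mem_CA i⟩, rfl⟩)

def MaxSet.toAddMonoidHom {Φ : CA K → ℝ} (hΦ : Φ ∈ MaxSet K) : caAddSubgroup K →+ ℝ :=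
  AddMonoidHom.mk' (fun f => Φ ⟨f, f.2⟩) fun _ _ => hΦ.1 _ _ _ fun _ => rfl

def evalMaxSet (K : Set (I → ℝ)) (x : K) : MaxSet K :=
  ⟨fun f => (f : K → ℝ) x, fun _ _ _ h => h x, fun _ _ _ h => h x, fun _ _ _ h => h x,
    fun _ h => h x⟩

lemma continuous_evalMaxSet : Continuous (evalMaxSet K) :=
  (continuous_pi fun f => f.2.1).subtype_mk _

lemma evalMaxSet_injective : Function.Injective (evalMaxSet K) := fun _ _ hxy =>
  Subtype.ext <| funext fun i => congrFun (congrArg Subtype.val hxy) ⟨_, proj_mem_CA i⟩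

lemma evalMaxSet_surjective [CompactSpace K] : Function.Surjective (evalMaxSet K) := by
  rintro ⟨Φ, hΦ⟩
  obtain ⟨y, hy⟩ := exists_map_eq_eval (φ := MaxSet.toAddMonoidHom hΦ)
    (fun _ (hf : _ ∈ CA K) => hf.1)
    one_mem_CA sup_mem_CA (hΦ.2.2.2 _ fun _ => rfl) fun _ _ => hΦ.2.1 _ _ _ fun _ => rfl
  exact ⟨y, Subtype.ext <| funext fun f => (hy ⟨f, f.2⟩).symm⟩

end AMaps

/-- For a compact `K ⊆ ℝ^I`, the evaluation map `η : K → Max(C(K))`,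
`x ↦ (f ↦ f x)`, is a bijection and a homeomorphism onto `Max(C(K))` (with its topology
induced from the product topology of `ℝ^{C(K)}`), and for every `x ∈ K`,
`lcm {den (f x) : f ∈ C(K)} = den x`. -/
theorem evaluation_homeomorphism_of_compact
    {I : Type*} (K : Set (I → ℝ)) (hK : IsCompact K) :
    ∃ η : K ≃ₜ MaxSet K,
      (∀ (x : K) (f : CA K), (η x : (CA K) → ℝ) f = (f : K → ℝ) x) ∧
      ∀ x : K, setLcm (Set.range fun f : CA K => den ((f : K → ℝ) x)) = denV (x : I → ℝ) := by
  have : CompactSpace K := isCompact_iff_compactSpace.mp hK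
  let η := Equiv.ofBijective (evalMaxSet K) ⟨evalMaxSet_injective, evalMaxSet_surjective⟩
  exact ⟨continuous_evalMaxSet.homeoOfEquivCompactToT2 (f := η), fun _ _ => rfl,
    setLcm_den_apply_eq_denV⟩
end

section
/- Let (X,ζ) be an a-space whose underlying topological space is compact and Hausdorff. Then the following are equivalent: (N3') for any two distinct points x, y ∈ X there exist disjoint open sets U ∋ x and V ∋ y such that ζ(z) = 0 for every z ∈ X \ (U ∪ V); (N3) for any two disjoint closed subsets A and B of X there exist disjoint open sets U ⊇ A and V ⊇ B such that ζ(z) = 0 for every z ∈ X \ (U ∪ V). -/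
/-- Auxiliary step: if `A` is compact and every point of `A` can be separated from `B`
(with the denominator vanishing outside the two open sets), then `A` itself can be
separated from `B` in the same way. -/
lemma aSep_step {X : Type*} [TopologicalSpace X] (ζ : X → ℕ) {A B : Set X}
    (hA : IsCompact A)
    (h : ∀ a ∈ A, ∃ U V : Set X, IsOpen U ∧ IsOpen V ∧ a ∈ U ∧ B ⊆ V ∧
        Disjoint U V ∧ ∀ z ∈ (U ∪ V)ᶜ, ζ z = 0) :
    ∃ U V : Set X, IsOpen U ∧ IsOpen V ∧ A ⊆ U ∧ B ⊆ V ∧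
        Disjoint U V ∧ ∀ z ∈ (U ∪ V)ᶜ, ζ z = 0 := by
  choose U V hUo hVo hmem hBsub hdisj hzero using fun a : A => h a a.2
  have hcov : A ⊆ ⋃ a : A, U a := fun x hx => Set.mem_iUnion.2 ⟨⟨x, hx⟩, hmem _⟩
  obtain ⟨t, ht⟩ := hA.elim_finite_subcover U hUo hcov
  refine ⟨⋃ a ∈ t, U a, ⋂ a ∈ t, V a, isOpen_biUnion fun a _ => hUo a,
    isOpen_biInter_finset fun a _ => hVo a, ht, ?_, ?_, ?_⟩
  · exact fun b hb => Set.mem_iInter₂.2 fun a _ => hBsub a hb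
  · rw [Set.disjoint_left]
    intro z hz hz'
    obtain ⟨a, ha, hza⟩ := Set.mem_iUnion₂.1 hz
    exact (Set.disjoint_left.1 (hdisj a) hza) (Set.mem_iInter₂.1 hz' a ha)
  · intro z hz
    simp only [Set.mem_compl_iff, Set.mem_union, Set.mem_iUnion₂, Set.mem_iInter₂,
      not_or, not_exists, not_forall] at hz
    obtain ⟨a, ha, hza⟩ := hz.2
    exact hzero a z (by simp [Set.mem_union, hz.1 a ha, hza])

/-- Symmetry of the separation property. -/
lemma aSep_symm {X : Type*} [TopologicalSpace X] (ζ : X → ℕ) {A B : Set X}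
    (h : ∃ U V : Set X, IsOpen U ∧ IsOpen V ∧ A ⊆ U ∧ B ⊆ V ∧
        Disjoint U V ∧ ∀ z ∈ (U ∪ V)ᶜ, ζ z = 0) :
    ∃ U V : Set X, IsOpen U ∧ IsOpen V ∧ B ⊆ U ∧ A ⊆ V ∧
        Disjoint U V ∧ ∀ z ∈ (U ∪ V)ᶜ, ζ z = 0 := by
  obtain ⟨U, V, hUo, hVo, hAU, hBV, hd, hz⟩ := h
  exact ⟨V, U, hVo, hUo, hBV, hAU, hd.symm, by rwa [Set.union_comm]⟩

/-- For a compact Hausdorff a-space `(X, ζ)`, the separation property (N3')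
for points is equivalent to the separation property (N3) for disjoint closed sets. -/
theorem aHausdorff_iff_aNormal
    {X : Type*} [TopologicalSpace X] [CompactSpace X] [T2Space X] (ζ : X → ℕ) :
    (∀ x y : X, x ≠ y → ∃ U V : Set X, IsOpen U ∧ IsOpen V ∧ x ∈ U ∧ y ∈ V ∧
        Disjoint U V ∧ ∀ z ∈ (U ∪ V)ᶜ, ζ z = 0) ↔
    (∀ A B : Set X, IsClosed A → IsClosed B → Disjoint A B →
        ∃ U V : Set X, IsOpen U ∧ IsOpen V ∧ A ⊆ U ∧ B ⊆ V ∧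
        Disjoint U V ∧ ∀ z ∈ (U ∪ V)ᶜ, ζ z = 0) := by
  constructor
  · intro h A B hAc hBc hAB
    -- first separate each point b of B from A
    have hb : ∀ b ∈ B, ∃ U V : Set X, IsOpen U ∧ IsOpen V ∧ b ∈ U ∧ A ⊆ V ∧
        Disjoint U V ∧ ∀ z ∈ (U ∪ V)ᶜ, ζ z = 0 := by
      intro b hb
      have ha : ∀ a ∈ A, ∃ U V : Set X, IsOpen U ∧ IsOpen V ∧ a ∈ U ∧ ({b} : Set X) ⊆ V ∧
          Disjoint U V ∧ ∀ z ∈ (U ∪ V)ᶜ, ζ z = 0 := by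
        intro a ha
        have hne : a ≠ b := fun e => Set.disjoint_left.1 hAB ha (e ▸ hb)
        obtain ⟨U, V, hUo, hVo, haU, hbV, hd, hz⟩ := h a b hne
        exact ⟨U, V, hUo, hVo, haU, Set.singleton_subset_iff.2 hbV, hd, hz⟩
      have := aSep_step ζ (hAc.isCompact) ha
      obtain ⟨U, V, hUo, hVo, hbU, hAV, hd, hz⟩ := aSep_symm ζ this
      exact ⟨U, V, hUo, hVo, hbU (Set.mem_singleton b), hAV, hd, hz⟩
    exact aSep_symm ζ (aSep_step ζ hBc.isCompact hb)
  · intro h x y hxy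
    obtain ⟨U, V, hUo, hVo, hxU, hyV, hd, hz⟩ :=
      h {x} {y} isClosed_singleton isClosed_singleton (Set.disjoint_singleton.2 hxy)
    exact ⟨U, V, hUo, hVo, hxU rfl, hyV rfl, hd, hz⟩
end

section
/- Let X be an a-space and let (D,(r◁,r▷)_{r ∈ D}) be an [α,β]-draft on X with D dense in [α,β]. Then for every x ∈ X, inf{r ∈ D : x ∈ r◁} = sup{r ∈ D : x ∈ r▷}. -/
/-- `AC ζ Λ`: the points of the a-space `(X, ζ)` that may be sent into `Λ ⊆ ℝ` by a
denominator-decreasing map. -/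
def AC {X : Type*} (ζ : X → ℕ) (Λ : Set ℝ) : Set X := {x | ∃ l ∈ Λ, den l ∣ ζ x}

/-- An `[α,β]`-draft on an a-space `(X, ζ)`. -/
def IsDraft {X : Type*} [TopologicalSpace X] (ζ : X → ℕ) (α β : ℝ)
    (D : Set ℝ) (down up : ℝ → Set X) : Prop :=
  D ⊆ Set.Icc α β ∧ α ∈ D ∧ β ∈ D ∧
  (∀ r ∈ D, IsClosed (down r)) ∧ (∀ r ∈ D, IsClosed (up r)) ∧
  up α = Set.univ ∧ down β = Set.univ ∧
  (∀ r ∈ D, down r ∪ up r = Set.univ) ∧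
  (∀ r ∈ D, ∀ s ∈ D, r < s → down r ∩ up s = ∅) ∧
  (∀ r ∈ D, ∀ s ∈ D, r ≤ s → up r ∩ down s ⊆ AC ζ (Set.Icc r s))

/-- For a draft on a dense subset `D` of `[α,β]` and any `x ∈ X`,
`inf {r ∈ D : x ∈ r◁} = sup {r ∈ D : x ∈ r▷}`. -/
theorem draft_inf_eq_sup
    {X : Type*} [TopologicalSpace X] (ζ : X → ℕ) (α β : ℝ)
    (D : Set ℝ) (down up : ℝ → Set X)
    (h : IsDraft ζ α β D down up)
    (hdense : Set.Icc α β ⊆ closure D) :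
    ∀ x : X, sInf {r | r ∈ D ∧ x ∈ down r} = sSup {r | r ∈ D ∧ x ∈ up r} := by
  obtain ⟨hD, hα, hβ, -, -, hupα, hdownβ, hcov, hsep, -⟩ := h
  intro x
  set A := {r | r ∈ D ∧ x ∈ down r} with hA
  set B := {r | r ∈ D ∧ x ∈ up r} with hB
  have hβA : β ∈ A := ⟨hβ, by simp [hdownβ]⟩
  have hαB : α ∈ B := ⟨hα, by simp [hupα]⟩
  have hAbdd : BddBelow A := ⟨α, fun r hr => (hD hr.1).1⟩
  have hBbdd : BddAbove B := ⟨β, fun r hr => (hD hr.1).2⟩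
  have hBA : ∀ s ∈ B, ∀ r ∈ A, s ≤ r := by
    intro s hs r hr
    by_contra hlt
    push_neg at hlt
    have hempty := hsep r hr.1 s hs.1 hlt
    have hx : x ∈ down r ∩ up s := ⟨hr.2, hs.2⟩
    simp [hempty] at hx
  have h1 : sSup B ≤ sInf A :=
    csSup_le ⟨α, hαB⟩ fun s hs => le_csInf ⟨β, hβA⟩ fun r hr => hBA s hs r hr
  have hαa : α ≤ sSup B := le_csSup hBbdd hαB
  have hbβ : sInf A ≤ β := csInf_le hAbdd hβA
  refine le_antisymm ?_ h1
  by_contra hlt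
  push_neg at hlt
  set m := (sSup B + sInf A) / 2 with hm
  have hm1 : sSup B < m := by simp only [hm]; linarith
  have hm2 : m < sInf A := by simp only [hm]; linarith
  have hmem : m ∈ Set.Icc α β := ⟨by linarith, by linarith⟩
  have hcl := hdense hmem
  rw [mem_closure_iff] at hcl
  obtain ⟨r, hr, hrD⟩ := hcl (Set.Ioo (sSup B) (sInf A)) isOpen_Ioo ⟨hm1, hm2⟩
  have hx : x ∈ down r ∪ up r := by rw [hcov r hrD]; exact Set.mem_univ x
  rcases hx with hx | hx
  · exact absurd (csInf_le hAbdd ⟨hrD, hx⟩) (not_le.2 hr.2)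
  · exact absurd (le_csSup hBbdd ⟨hrD, hx⟩) (not_le.2 hr.1)
end
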